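/- Recursion (L2): for every σ ∈ {0,1,…,r}^N and every integer k with 1 ≤ k ≤ r-1, 𝐟(σ·k) = 𝐟((k-1)·σ), where σ·k denotes σ with the entry k appended and (k-1)·σ denotes σ with the entry k-1 prepended. -/

import Mathlib

open MvPolynomial

noncomputable section

/-- The field `F = ℚ(q,a,t)` of rational functions in three variables over `ℚ`. -/
abbrev KRF : Type := FractionRing (MvPolynomial (Fin 3) ℚ)

/-- The variable `q` in `F`. -/
def fq : KRF := algebraMap (MvPolynomial (Fin 3) ℚ) KRF (X 0)
/-- The variable `a` in `F`. -/
def fa : KRF := algebraMap (MvPolynomial (Fin 3) ℚ) KRF (X 1)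
/-- The variable `t` in `F`. -/
def ft : KRF := algebraMap (MvPolynomial (Fin 3) ℚ) KRF (X 2)

/-- The number `|v|` of ones in a binary sequence. -/
def onesCt (v : List Bool) : ℕ := v.count true

/-- A p-family: a function on (balanced) pairs of binary sequences with values in
`F = ℚ(q,a,t)` satisfying the five recursion rules (1)-(5). -/
def IsPFamily (p : List Bool → List Bool → KRF) : Prop :=
  (∀ n : ℕ, p [] (List.replicate n false) = ((1 + fa) / (1 - fq)) ^ n) ∧
  (∀ m : ℕ, p (List.replicate m false) [] = ((1 + fa) / (1 - fq)) ^ m) ∧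
  (∀ v w : List Bool, onesCt v = onesCt w →
      p (v ++ [true]) (w ++ [true]) = (ft ^ onesCt v + fa) * p v w) ∧
  (∀ v w : List Bool, onesCt v = onesCt w + 1 →
      p (v ++ [false]) (w ++ [true]) = p v (true :: w)) ∧
  (∀ v w : List Bool, onesCt v + 1 = onesCt w →
      p (v ++ [true]) (w ++ [false]) = p (true :: v) w) ∧
  (∀ v w : List Bool, onesCt v = onesCt w →
      p (v ++ [false]) (w ++ [false]) =
        ft ^ (-(onesCt v : ℤ)) * p (true :: v) (true :: w) +
          fq * ft ^ (-(onesCt v : ℤ)) * p (false :: v) (false :: w))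

/-- The symbols `1`, `0`, `∗` used in fillings. -/
inductive Symb : Type
  | one : Symb
  | zero : Symb
  | star : Symb
deriving DecidableEq

/-- An admissible filling of the `r × N` grid (rows indexed top-to-bottom by `Fin r`,
columns left-to-right by `Fin N`): every row and every column contains at most one `1`,
every cell strictly below a `1` in the same column is `∗`, and every other cell is `0`
(i.e. every `∗` lies strictly below a `1` in its column). -/
def IsAdmissible {r N : ℕ} (T : Fin r → Fin N → Symb) : Prop :=
  (∀ (i : Fin r) (j j' : Fin N), T i j = Symb.one → T i j' = Symb.one → j = j') ∧
  (∀ (j : Fin N) (i i' : Fin r), T i j = Symb.one → T i' j = Symb.one → i = i') ∧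
  (∀ (i i' : Fin r) (j : Fin N), T i j = Symb.one → i < i' → T i' j = Symb.star) ∧
  (∀ (i : Fin r) (j : Fin N), T i j = Symb.star → ∃ i' : Fin r, i' < i ∧ T i' j = Symb.one)

/-- `σ(T)_j`: the number of cells labeled `0` in the `j`-th column of `T`. -/
def colZeros {r N : ℕ} (T : Fin r → Fin N → Symb) (j : Fin N) : ℕ :=
  (Finset.univ.filter (fun i => T i j = Symb.zero)).card

/-- `v(T)_j = 1` iff the `j`-th column of `T` is occupied (contains a `1`). -/
def vFun {r N : ℕ} (T : Fin r → Fin N → Symb) (j : Fin N) : Bool :=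
  decide (∃ i : Fin r, T i j = Symb.one)

/-- The binary sequence `v(T)` as a list. -/
def vList {r N : ℕ} (T : Fin r → Fin N → Symb) : List Bool :=
  (List.finRange N).map (vFun T)

/-- The binary sequence `w(T)`: read the entries of `T` from left to right along each row,
taking the rows from bottom to top, skipping all cells labeled `∗` (with `1 ↦ true`,
`0 ↦ false`). -/
def wList {r N : ℕ} (T : Fin r → Fin N → Symb) : List Bool :=
  ((List.finRange r).reverse.map (fun i =>
    (List.finRange N).filterMap (fun j =>
      match T i j with
      | Symb.one => some true
      | Symb.zero => some false
      | Symb.star => none))).flatten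

/-- canonical column content -/
def canon (c n : ℕ) : Symb :=
  if n < c then Symb.zero else if n = c then Symb.one else Symb.star

def opt (c n : ℕ) : Option Bool :=
  if n < c then some false else if n = c then some true else none

lemma colStruct {r N : ℕ} (T : Fin r → Fin N → Symb) (hT : IsAdmissible T)
    (i : Fin r) (j : Fin N) : T i j = canon (colZeros T j) i.val := by
  obtain ⟨h1, h2, h3, h4⟩ := hT
  by_cases hone : ∃ i0, T i0 j = Symb.one
  · obtain ⟨i0, hi0⟩ := hone
    have hz : ∀ i', i' < i0 → T i' j = Symb.zero := by
      intro i' hlt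
      cases he : T i' j with
      | one => exact absurd (h2 j _ _ he hi0) (ne_of_lt hlt)
      | zero => rfl
      | star =>
        obtain ⟨i'', hlt'', hone''⟩ := h4 i' j he
        have := h2 j _ _ hone'' hi0
        subst this
        exact absurd (hlt''.trans hlt) (lt_irrefl _)
    have hc : colZeros T j = i0.val := by
      unfold colZeros
      have hset : Finset.univ.filter (fun i => T i j = Symb.zero) = Finset.Iio i0 := by
        ext x
        simp only [Finset.mem_filter, Finset.mem_univ, true_and, Finset.mem_Iio]
        constructor
        · intro hx
          rcases lt_trichotomy x i0 with h | h | h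
          · exact h
          · subst h; rw [hi0] at hx; exact absurd hx (by simp)
          · rw [h3 i0 x j hi0 h] at hx; exact absurd hx (by simp)
        · exact hz x
      rw [hset, Fin.card_Iio]
    rw [hc]
    rcases lt_trichotomy i i0 with h | h | h
    · have hv : (i : ℕ) < (i0 : ℕ) := h
      rw [hz i h]; simp [canon, hv]
    · subst h; rw [hi0]; simp [canon]
    · have hv : (i0 : ℕ) < (i : ℕ) := h
      rw [h3 i0 i j hi0 h]
      simp only [canon]
      rw [if_neg (by omega), if_neg (by omega)]
  · push_neg at hone
    have hz : ∀ i', T i' j = Symb.zero := by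
      intro i'
      cases he : T i' j with
      | one => exact absurd he (hone i')
      | zero => rfl
      | star =>
        obtain ⟨i'', _, hone''⟩ := h4 i' j he
        exact absurd hone'' (hone i'')
    have hc : colZeros T j = r := by
      unfold colZeros
      simp [Finset.filter_true_of_mem (fun x _ => hz x)]
    rw [hc, hz i]
    simp [canon, i.isLt]

lemma canon_one_iff {r : ℕ} (c : ℕ) : (∃ i : Fin r, canon c i.val = Symb.one) ↔ c < r := by
  constructor
  · rintro ⟨i, hi⟩
    have hle := i.isLt
    unfold canon at hi
    by_cases h1 : (i : ℕ) < c
    · rw [if_pos h1] at hi; cases hi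
    · rw [if_neg h1] at hi
      by_cases h2 : (i : ℕ) = c
      · omega
      · rw [if_neg h2] at hi; cases hi
  · intro h
    exact ⟨⟨c, h⟩, by simp [canon]⟩

lemma canon_match (c n : ℕ) :
    (match canon c n with
      | Symb.one => some true
      | Symb.zero => some false
      | Symb.star => none) = opt c n := by
  unfold canon opt
  split_ifs <;> rfl

lemma finRange_succ_last (n : ℕ) :
    List.finRange (n + 1) = (List.finRange n).map Fin.castSucc ++ [Fin.last n] := by
  apply List.map_injective_iff.mpr Fin.val_injective
  rw [List.map_coe_finRange_eq_range, List.map_append, List.map_map]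
  simp [Function.comp_def, List.range_succ, ← List.map_coe_finRange_eq_range]

lemma shift_lemma (B E : ℕ → List Bool) (m : ℕ) :
    E m ++ ((List.range m).reverse.map (fun n => B n ++ E n)).flatten =
      ((List.range m).reverse.map (fun n => E (n + 1) ++ B n)).flatten ++ E 0 := by
  induction m with
  | zero => simp
  | succ m ih =>
    rw [List.range_succ, List.reverse_append]
    simp only [List.reverse_singleton, List.singleton_append, List.map_cons, List.flatten_cons]
    rw [← List.append_assoc, List.append_assoc (E (m+1)) (B m ++ E m), List.append_assoc (B m),
      ih]
    simp [List.append_assoc]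

lemma count_filterMap_opt {α : Type*} (c : α → ℕ) (n : ℕ) (l : List α) :
    (l.filterMap (fun j => opt (c j) n)).count true =
      (l.map (fun j => if c j = n then 1 else 0)).sum := by
  induction l with
  | nil => simp
  | cons a l ih =>
    rw [List.filterMap_cons, List.map_cons, List.sum_cons]
    rcases lt_trichotomy n (c a) with h | h | h
    · have e1 : ¬ c a = n := by omega
      rw [show opt (c a) n = some false by simp [opt, h]]
      simp [List.count_cons, ih, e1]
    · have e1 : ¬ n < c a := by omega
      rw [show opt (c a) n = some true by simp [opt, e1, h]]
      simp [List.count_cons, ih, h.symm]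
      omega
    · have e1 : ¬ n < c a := by omega
      have e2 : ¬ n = c a := by omega
      have e3 : ¬ c a = n := by omega
      rw [show opt (c a) n = none by simp [opt, e1, e2]]
      simp [ih, e3]

lemma count_flatten_opt {α : Type*} (c : α → ℕ) (L : List ℕ) (l : List α) :
    ((L.map (fun n => l.filterMap (fun j => opt (c j) n))).flatten).count true =
      (l.map (fun j => L.count (c j))).sum := by
  induction L with
  | nil => simp
  | cons n L ih =>
    rw [List.map_cons, List.flatten_cons, List.count_append, count_filterMap_opt, ih]
    have h0 : ∀ j, (n :: L).count (c j) = (if c j = n then 1 else 0) + L.count (c j) := by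
      intro j
      rw [List.count_cons]
      by_cases h : n = c j
      · subst h
        simp
        omega
      · have h' : ¬ c j = n := fun hh => h hh.symm
        simp [h, h']
    simp only [h0]
    rw [List.sum_map_add]

lemma count_map_decide {α : Type*} (P : α → Prop) [DecidablePred P] (l : List α) :
    (l.map (fun j => decide (P j))).count true = (l.map (fun j => if P j then 1 else 0)).sum := by
  induction l with
  | nil => simp
  | cons a l ih =>
    rw [List.map_cons, List.map_cons, List.sum_cons, List.count_cons, ih]
    by_cases h : P a
    · simp [h]
      omega
    · simp [h]

-- continuation lemmas
lemma opt_shift (k n : ℕ) (hk : 1 ≤ k) : opt k (n + 1) = opt (k - 1) n := by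
  unfold opt
  split_ifs <;> first | rfl | omega

lemma opt_top (k n : ℕ) (h : k < n) : opt k n = none := by
  unfold opt
  rw [if_neg (by omega), if_neg (by omega)]

lemma opt_bot (k : ℕ) (h : 0 < k) : opt k 0 = some false := by
  unfold opt
  rw [if_pos h]

lemma count_range (r m : ℕ) : (List.range r).count m = if m < r then 1 else 0 := by
  by_cases h : m < r
  · rw [if_pos h]
    exact List.count_eq_one_of_mem List.nodup_range (List.mem_range.mpr h)
  · rw [if_neg h]
    exact List.count_eq_zero_of_not_mem (fun hm => h (List.mem_range.mp hm))

lemma wList_eq {r N : ℕ} (T : Fin r → Fin N → Symb) (hT : IsAdmissible T)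
    (c : Fin N → ℕ) (hc : ∀ j, colZeros T j = c j) :
    wList T = ((List.range r).reverse.map (fun n =>
      (List.finRange N).filterMap (fun j => opt (c j) n))).flatten := by
  unfold wList
  have h1 : ((List.finRange r).reverse.map (fun i =>
      (List.finRange N).filterMap (fun j =>
        match T i j with
        | Symb.one => some true
        | Symb.zero => some false
        | Symb.star => none))) = ((List.finRange r).reverse.map (fun i =>
      (List.finRange N).filterMap (fun j => opt (c j) i.val))) := by
    congr 1
    funext i
    congr 1
    funext j
    rw [colStruct T hT i j, hc j, canon_match]
  rw [h1]
  congr 1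
  rw [← List.map_coe_finRange_eq_range, ← List.map_reverse, List.map_map]
  rfl

lemma vList_eq {r N : ℕ} (T : Fin r → Fin N → Symb) (hT : IsAdmissible T)
    (c : Fin N → ℕ) (hc : ∀ j, colZeros T j = c j) :
    vList T = (List.finRange N).map (fun j => decide (c j < r)) := by
  unfold vList vFun
  congr 1
  funext j
  apply decide_eq_decide.mpr
  constructor
  · rintro ⟨i, hi⟩
    rw [colStruct T hT i j, hc j] at hi
    exact (canon_one_iff (c j)).mp ⟨i, hi⟩
  · intro h
    obtain ⟨i, hi⟩ := (canon_one_iff (c j)).mpr h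
    refine ⟨i, ?_⟩
    rw [colStruct T hT i j, hc j]
    exact hi


/-- Recursion (L2): `𝐟(σ·k) = 𝐟((k-1)·σ)` for `1 ≤ k ≤ r-1`.
Here `𝐟(σ) = p(v(σ), w(σ))`, with `T1` (resp. `T2`) the unique admissible filling whose
column-zero-counts are `σ·k` (i.e. `Fin.snoc σ k`) (resp. `(k-1)·σ`, i.e.
`Fin.cons (k-1) σ`). -/
theorem f_recursion_L2 (p : List Bool → List Bool → KRF) (hp : IsPFamily p)
    (r : ℕ) (hr : 1 ≤ r) (N : ℕ) (σ : Fin N → ℕ) (hσ : ∀ i, σ i ≤ r)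
    (k : ℕ) (hk1 : 1 ≤ k) (hk2 : k ≤ r - 1)
    (T1 : Fin r → Fin (N + 1) → Symb) (hT1 : IsAdmissible T1)
    (hT1σ : ∀ j, colZeros T1 j = (Fin.snoc σ k : Fin (N + 1) → ℕ) j)
    (T2 : Fin r → Fin (N + 1) → Symb) (hT2 : IsAdmissible T2)
    (hT2σ : ∀ j, colZeros T2 j = (Fin.cons (k - 1) σ : Fin (N + 1) → ℕ) j) :
    p (vList T1) (wList T1) = p (vList T2) (wList T2) := by

  have hkr : k < r := by omega
  set V : List Bool := (List.finRange N).map (fun j => decide (σ j < r)) with hV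
  set B : ℕ → List Bool := fun n => (List.finRange N).filterMap (fun j => opt (σ j) n) with hB
  -- split rows of T1
  have hsplit1 : ∀ n : ℕ, (List.finRange (N + 1)).filterMap
      (fun j => opt ((Fin.snoc σ k : Fin (N + 1) → ℕ) j) n) = B n ++ (opt k n).toList := by
    intro n
    rw [finRange_succ_last, List.filterMap_append, List.filterMap_map]
    congr 1
    · congr 1
      funext j
      simp [Function.comp, Fin.snoc_castSucc]
    · cases h : opt k n <;> simp [List.filterMap_cons, Fin.snoc_last, h]
  have hsplit2 : ∀ n : ℕ, (List.finRange (N + 1)).filterMap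
      (fun j => opt ((Fin.cons (k - 1) σ : Fin (N + 1) → ℕ) j) n) =
      (opt (k - 1) n).toList ++ B n := by
    intro n
    rw [List.finRange_succ, List.filterMap_cons, List.filterMap_map]
    have hcomp : ((fun j : Fin (N + 1) => opt ((Fin.cons (k - 1) σ : Fin (N + 1) → ℕ) j) n) ∘
        Fin.succ) = fun j : Fin N => opt (σ j) n := by
      funext j
      simp [Function.comp, Fin.cons_succ]
    rw [hcomp]
    have h0 : (Fin.cons (k - 1) σ : Fin (N + 1) → ℕ) 0 = k - 1 := Fin.cons_zero _ _
    rw [h0]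
    cases h : opt (k - 1) n with
    | none => simp [h, hB]
    | some b => simp [h, hB]
  -- wList relation
  have hw1 : wList T1 = ((List.range r).reverse.map
      (fun n => B n ++ (opt k n).toList)).flatten := by
    rw [wList_eq T1 hT1 _ hT1σ]
    congr 1
    exact List.map_congr_left (fun n _ => hsplit1 n)
  have hw2 : wList T2 = ((List.range r).reverse.map
      (fun n => (opt (k - 1) n).toList ++ B n)).flatten := by
    rw [wList_eq T2 hT2 _ hT2σ]
    congr 1
    exact List.map_congr_left (fun n _ => hsplit2 n)
  have hw : wList T1 = wList T2 ++ [false] := by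
    rw [hw1, hw2]
    have := shift_lemma B (fun n => (opt k n).toList) r
    rw [opt_top k r hkr] at this
    simp only [Option.toList_none, List.nil_append] at this
    rw [this, opt_bot k hk1]
    congr 1
    congr 1
    apply List.map_congr_left
    intro n _
    rw [opt_shift k n hk1]
  -- vList relations
  have hv1 : vList T1 = V ++ [true] := by
    rw [vList_eq T1 hT1 _ hT1σ, finRange_succ_last, List.map_append, List.map_map]
    congr 1
    · apply List.map_congr_left
      intro j _
      simp [Function.comp, Fin.snoc_castSucc]
    · simp [Fin.snoc_last, hkr]
  have hv2 : vList T2 = true :: V := by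
    rw [vList_eq T2 hT2 _ hT2σ, List.finRange_succ, List.map_cons, List.map_map]
    have h0 : decide ((Fin.cons (k - 1) σ : Fin (N + 1) → ℕ) 0 < r) = true := by
      rw [Fin.cons_zero, decide_eq_true_eq]
      omega
    rw [h0]
    congr 1
  -- counting
  have hcw : onesCt (wList T2) = onesCt (vList T2) := by
    rw [wList_eq T2 hT2 _ hT2σ, vList_eq T2 hT2 _ hT2σ]
    unfold onesCt
    rw [count_flatten_opt, count_map_decide]
    congr 1
    apply List.map_congr_left
    intro j _
    rw [List.count_reverse, count_range]
  have hcond : onesCt V + 1 = onesCt (wList T2) := by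
    rw [hcw, hv2]
    unfold onesCt
    rw [List.count_cons]
    simp
  rw [hv1, hv2, hw]
  exact hp.2.2.2.2.1 V (wList T2) hcond
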